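/- Let (X,e,μ) be an NP_i-digital H-space (i ∈ {1,2}) with X connected and NP_i-irreducible. Then there exist a left inverse map α : X → X and a right inverse map β : X → X; that is, continuous maps with μ(α(x),x) = e and μ(x,β(x)) = e for all x ∈ X. -/

import Mathlib

/-- A digital image: a finite set with a reflexive, symmetric adjacency relation
(a finite reflexive graph). -/
structure DigImage where
  carrier : Type
  [fintype : Fintype carrier]
  adj : carrier → carrier → Prop
  adj_refl : ∀ x, adj x x
  adj_symm : ∀ {x y}, adj x y → adj y x

attribute [instance] DigImage.fintype

/-- `f : (X,κ) → (Y,λ)` is digitally continuous if it preserves adjacency. -/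
def DigContinuous (X Y : DigImage) (f : X.carrier → Y.carrier) : Prop :=
  ∀ ⦃a b : X.carrier⦄, X.adj a b → Y.adj (f a) (f b)

/-- The product of two digital images with the normal product adjacency `NP_i`
(for `i ≤ 1` this is `NP_1`; otherwise `NP_2`): two pairs are adjacent iff
their coordinates are adjacent in at most `i` positions and equal elsewhere. -/
def DigImage.prod (i : ℕ) (X Y : DigImage) : DigImage where
  carrier := X.carrier × Y.carrier
  adj p q :=
    if i ≤ 1 then (p.1 = q.1 ∧ Y.adj p.2 q.2) ∨ (p.2 = q.2 ∧ X.adj p.1 q.1)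
    else X.adj p.1 q.1 ∧ Y.adj p.2 q.2
  adj_refl p := by
    split_ifs
    · exact Or.inl ⟨rfl, Y.adj_refl p.2⟩
    · exact ⟨X.adj_refl p.1, Y.adj_refl p.2⟩
  adj_symm {p q} h := by
    split_ifs at h ⊢ with hi
    · rcases h with ⟨h1, h2⟩ | ⟨h1, h2⟩
      · exact Or.inl ⟨h1.symm, Y.adj_symm h2⟩
      · exact Or.inr ⟨h1.symm, X.adj_symm h2⟩
    · exact ⟨X.adj_symm h.1, Y.adj_symm h.2⟩

/-- The triple product of digital images with the normal product adjacency `NP_i`: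
coordinates adjacent in at most `i` positions and equal in all other positions. -/
def DigImage.prod3 (i : ℕ) (X Y Z : DigImage) : DigImage where
  carrier := X.carrier × Y.carrier × Z.carrier
  adj p q :=
    if i ≤ 1 then
      (p.1 = q.1 ∧ p.2.1 = q.2.1 ∧ Z.adj p.2.2 q.2.2) ∨
      (p.1 = q.1 ∧ p.2.2 = q.2.2 ∧ Y.adj p.2.1 q.2.1) ∨
      (p.2.1 = q.2.1 ∧ p.2.2 = q.2.2 ∧ X.adj p.1 q.1)
    else
      (p.1 = q.1 ∧ Y.adj p.2.1 q.2.1 ∧ Z.adj p.2.2 q.2.2) ∨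
      (p.2.1 = q.2.1 ∧ X.adj p.1 q.1 ∧ Z.adj p.2.2 q.2.2) ∨
      (p.2.2 = q.2.2 ∧ X.adj p.1 q.1 ∧ Y.adj p.2.1 q.2.1)
  adj_refl p := by
    split_ifs
    · exact Or.inl ⟨rfl, rfl, Z.adj_refl p.2.2⟩
    · exact Or.inl ⟨rfl, Y.adj_refl p.2.1, Z.adj_refl p.2.2⟩
  adj_symm {p q} h := by
    split_ifs at h ⊢ with hi
    · rcases h with ⟨h1, h2, h3⟩ | ⟨h1, h2, h3⟩ | ⟨h1, h2, h3⟩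
      · exact Or.inl ⟨h1.symm, h2.symm, Z.adj_symm h3⟩
      · exact Or.inr (Or.inl ⟨h1.symm, h2.symm, Y.adj_symm h3⟩)
      · exact Or.inr (Or.inr ⟨h1.symm, h2.symm, X.adj_symm h3⟩)
    · rcases h with ⟨h1, h2, h3⟩ | ⟨h1, h2, h3⟩ | ⟨h1, h2, h3⟩
      · exact Or.inl ⟨h1.symm, Y.adj_symm h2, Z.adj_symm h3⟩
      · exact Or.inr (Or.inl ⟨h1.symm, X.adj_symm h2, Z.adj_symm h3⟩)
      · exact Or.inr (Or.inr ⟨h1.symm, X.adj_symm h2, Y.adj_symm h3⟩)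

/-- The digital interval `[0,m]_ℤ` with the standard adjacency `|a−b| ≤ 1`. -/
def digInterval (m : ℕ) : DigImage where
  carrier := Fin (m + 1)
  adj a b := |(a : ℤ) - (b : ℤ)| ≤ 1
  adj_refl a := by simp
  adj_symm {a b} h := by
    have h' : |(a : ℤ) - (b : ℤ)| ≤ 1 := h
    rw [abs_sub_comm] at h'
    exact h'

/-- `f` and `g` are `NP_i`-digitally homotopic: there is an
`NP_i`-continuous `H : X × [0,m]_ℤ → Y` with `H(·,0) = f` and `H(·,m) = g`. -/
def DigHomotopic (i : ℕ) (X Y : DigImage) (f g : X.carrier → Y.carrier) : Prop :=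
  ∃ (m : ℕ) (H : X.carrier × Fin (m + 1) → Y.carrier),
    DigContinuous (DigImage.prod i X (digInterval m)) Y H ∧
    (∀ x, H (x, 0) = f x) ∧ (∀ x, H (x, Fin.last m) = g x)

/-- An `NP_i`-digital H-space `(X,e,μ)`. -/
structure IsHSpace (i : ℕ) (X : DigImage) (e : X.carrier)
    (μ : X.carrier × X.carrier → X.carrier) : Prop where
  continuous : DigContinuous (DigImage.prod i X X) X μ
  right_unit : DigHomotopic i X X (fun x => μ (x, e)) id
  left_unit : DigHomotopic i X X (fun x => μ (e, x)) id

/-- H-equivalence of `NP_i`-digital H-spaces. -/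
def HSpaceEquiv (i : ℕ) (X : DigImage) (eX : X.carrier)
    (μX : X.carrier × X.carrier → X.carrier)
    (Y : DigImage) (eY : Y.carrier)
    (μY : Y.carrier × Y.carrier → Y.carrier) : Prop :=
  ∃ (f : X.carrier → Y.carrier) (g : Y.carrier → X.carrier),
    DigContinuous X Y f ∧ DigContinuous Y X g ∧ f eX = eY ∧ g eY = eX ∧
    DigHomotopic i Y Y (f ∘ g) id ∧ DigHomotopic i X X (g ∘ f) id ∧
    DigHomotopic i (DigImage.prod i X X) Y (fun p => f (μX p)) (fun p => μY (f p.1, f p.2)) ∧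
    DigHomotopic i (DigImage.prod i Y Y) X (fun p => g (μY p)) (fun p => μX (g p.1, g p.2))

/-- `NP_i`-homotopy equivalence of digital images. -/
def DigHtpyEquiv (i : ℕ) (X Y : DigImage) : Prop :=
  ∃ (f : X.carrier → Y.carrier) (g : Y.carrier → X.carrier),
    DigContinuous X Y f ∧ DigContinuous Y X g ∧
    DigHomotopic i X X (g ∘ f) id ∧ DigHomotopic i Y Y (f ∘ g) id

/-- A digital image is `NP_i`-irreducible if it is not `NP_i`-homotopy
equivalent to any digital image with fewer points. -/
def DigIrreducible (i : ℕ) (X : DigImage) : Prop :=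
  ¬ ∃ Y : DigImage, Fintype.card Y.carrier < Fintype.card X.carrier ∧ DigHtpyEquiv i X Y

/-- A digital image is connected if any two points are joined by a path
of consecutively adjacent points. -/
def DigConnected (X : DigImage) : Prop :=
  ∀ a b : X.carrier, Relation.ReflTransGen X.adj a b

/-- A digital image is `NP_i`-contractible if the identity is `NP_i`-homotopic
to a constant map. -/
def DigContractible (i : ℕ) (X : DigImage) : Prop :=
  ∃ c : X.carrier, DigHomotopic i X X id (fun _ => c)

/-- An isomorphism of digital images: a continuous bijection with continuous inverse. -/
def IsDigIso (X Y : DigImage) (f : X.carrier → Y.carrier) : Prop :=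
  DigContinuous X Y f ∧ ∃ g : Y.carrier → X.carrier,
    DigContinuous Y X g ∧ Function.LeftInverse g f ∧ Function.RightInverse g f

/-- The sub-digital-image on the points satisfying `P`, with the induced adjacency. -/
noncomputable def subImage (X : DigImage) (P : X.carrier → Prop) : DigImage where
  carrier := {x : X.carrier // P x}
  fintype := Fintype.ofFinite _
  adj a b := X.adj a.1 b.1
  adj_refl a := X.adj_refl a.1
  adj_symm h := X.adj_symm h

/-- The connected component of `e`, as a digital image. -/
noncomputable def componentImage (X : DigImage) (e : X.carrier) : DigImage :=
  subImage X (fun x => Relation.ReflTransGen X.adj e x)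

/-- Homotopy-associativity of an `NP_i`-digital multiplication:
`μ∘(id × μ) ≃ᵢ μ∘(μ × id)` as maps `X × X × X → X` with `NP_i` adjacency. -/
def HomotopyAssociative (i : ℕ) (X : DigImage)
    (μ : X.carrier × X.carrier → X.carrier) : Prop :=
  DigHomotopic i (DigImage.prod3 i X X X) X
    (fun p => μ (p.1, μ (p.2.1, p.2.2)))
    (fun p => μ (μ (p.1, p.2.1), p.2.2))

/-- `α` is a left homotopy-inverse for the H-space `(X,e,μ)`. -/
def LeftHtpyInverse (i : ℕ) (X : DigImage) (e : X.carrier)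
    (μ : X.carrier × X.carrier → X.carrier) (α : X.carrier → X.carrier) : Prop :=
  DigContinuous X X α ∧ DigContinuous X X (fun x => μ (α x, x)) ∧
  DigHomotopic i X X (fun x => μ (α x, x)) (fun _ => e)

/-- `β` is a right homotopy-inverse for the H-space `(X,e,μ)`. -/
def RightHtpyInverse (i : ℕ) (X : DigImage) (e : X.carrier)
    (μ : X.carrier × X.carrier → X.carrier) (β : X.carrier → X.carrier) : Prop :=
  DigContinuous X X β ∧ DigContinuous X X (fun x => μ (x, β x)) ∧
  DigHomotopic i X X (fun x => μ (x, β x)) (fun _ => e)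

/-!
Connectedness makes every right translation `y ↦ μ (y, a)` homotopic to `y ↦ μ (y, e)`, hence
to the identity. On an irreducible image a self-map `f` homotopic to the identity is an
automorphism: some iterate `r = f^[n]` is idempotent, `X` is homotopy equivalent to the image of
`r`, so irreducibility forces `r` to be onto, hence `r = id` and `f^[n-1]` is a continuous inverse
of `f`. The left inverse is `α x = (μ (·, x))⁻¹ e`, continuous because these inverses are; right
inverses are left inverses for the opposite multiplication.
-/

open Function

theorem exists_iterate_idempotent {α : Type*} [Finite α] (f : α → α) :
    ∃ n, 0 < n ∧ f^[n] ∘ f^[n] = f^[n] := by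
  obtain ⟨a, b, hab, heq⟩ := Finite.exists_ne_map_eq_of_infinite fun k : ℕ => f^[k]
  wlog hlt : a < b generalizing a b
  · exact this b a hab.symm heq.symm (by omega)
  obtain ⟨p, rfl⟩ : ∃ p, b = a + (p + 1) := ⟨b - a - 1, by omega⟩
  have hstep : ∀ j, a ≤ j → f^[j + (p + 1)] = f^[j] := by
    intro j hj
    obtain ⟨k, rfl⟩ := Nat.exists_eq_add_of_le hj
    rw [add_right_comm, iterate_add, ← heq, ← iterate_add]
  have hper : ∀ c j, a ≤ j → f^[j + (p + 1) * c] = f^[j] := by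
    intro c
    induction c with
    | zero => simp
    | succ c ih =>
      intro j hj
      rw [mul_add_one, ← add_assoc, hstep _ (by omega), ih j hj]
  refine ⟨(p + 1) * (a + 1), by positivity, ?_⟩
  rw [← iterate_add, hper _ _ (by nlinarith)]

namespace DigImage

variable {i : ℕ} {X Y : DigImage}

theorem prod_adj_mk {a c : X.carrier} {b d : Y.carrier} (hX : X.adj a c) (hY : Y.adj b d)
    (hE : i ≤ 1 → a = c ∨ b = d) : (prod i X Y).adj (a, b) (c, d) := by
  change ite _ _ _
  split_ifs with hi
  · exact (hE hi).imp (fun h => ⟨h, hY⟩) (fun h => ⟨h, hX⟩)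
  · exact ⟨hX, hY⟩

theorem prod_adj_dest {p q : X.carrier × Y.carrier} (h : (prod i X Y).adj p q) :
    X.adj p.1 q.1 ∧ Y.adj p.2 q.2 ∧ (i ≤ 1 → p.1 = q.1 ∨ p.2 = q.2) := by
  change ite _ _ _ at h
  split_ifs at h with hi
  · rcases h with ⟨h1, h2⟩ | ⟨h1, h2⟩
    · exact ⟨h1 ▸ X.adj_refl _, h2, fun _ => Or.inl h1⟩
    · exact ⟨h2, h1 ▸ Y.adj_refl _, fun _ => Or.inr h1⟩
  · exact ⟨h.1, h.2, fun h' => absurd h' hi⟩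

theorem prod_adj_swap {p q : X.carrier × Y.carrier} (h : (prod i X Y).adj p q) :
    (prod i Y X).adj p.swap q.swap :=
  have ⟨hX, hY, hE⟩ := prod_adj_dest h
  prod_adj_mk hY hX fun hi => (hE hi).symm

end DigImage

open DigImage

theorem digInterval_adj_iff {m : ℕ} (a b : Fin (m + 1)) :
    (digInterval m).adj a b ↔ (a : ℕ) ≤ b + 1 ∧ (b : ℕ) ≤ a + 1 := by
  change |(a : ℤ) - b| ≤ 1 ↔ _
  rw [abs_le]
  omega

namespace DigContinuous

variable {i : ℕ} {W X Y Z : DigImage}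

protected theorem id (X : DigImage) : DigContinuous X X id := fun _ _ h => h

theorem comp {g : Y.carrier → Z.carrier} {f : X.carrier → Y.carrier}
    (hg : DigContinuous Y Z g) (hf : DigContinuous X Y f) : DigContinuous X Z (g ∘ f) :=
  fun _ _ h => hg (hf h)

theorem iterate {f : X.carrier → X.carrier} (hf : DigContinuous X X f) (n : ℕ) :
    DigContinuous X X f^[n] := by
  induction n with
  | zero => exact DigContinuous.id X
  | succ n ih => exact ih.comp hf

theorem prodMap {f : W.carrier → X.carrier} {g : Y.carrier → Z.carrier}
    (hf : DigContinuous W X f) (hg : DigContinuous Y Z g) :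
    DigContinuous (prod i W Y) (prod i X Z) (Prod.map f g) := fun _ _ h =>
  have ⟨hW, hY, hE⟩ := prod_adj_dest h
  prod_adj_mk (hf hW) (hg hY) fun hi => (hE hi).imp (congrArg f) (congrArg g)

theorem prodMk_left (a : X.carrier) : DigContinuous Y (prod i X Y) fun y => (a, y) :=
  fun _ _ h => prod_adj_mk (X.adj_refl a) h fun _ => Or.inl rfl

theorem prodMk_right (b : Y.carrier) : DigContinuous X (prod i X Y) fun x => (x, b) :=
  fun _ _ h => prod_adj_mk h (Y.adj_refl b) fun _ => Or.inr rfl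

theorem segment {a b : X.carrier} (hab : X.adj a b) : DigContinuous (digInterval 1) X ![a, b] := by
  intro s t _
  fin_cases s <;> fin_cases t
  exacts [X.adj_refl a, hab, X.adj_symm hab, X.adj_refl b]

end DigContinuous

namespace DigHomotopic

variable {i : ℕ} {W X Y : DigImage} {f g h : X.carrier → Y.carrier}

protected theorem refl (hf : DigContinuous X Y f) : DigHomotopic i X Y f f :=
  ⟨0, fun p => f p.1, fun _ _ hpq => hf (prod_adj_dest hpq).1, fun _ => rfl, fun _ => rfl⟩

theorem trans (h₁ : DigHomotopic i X Y f g) (h₂ : DigHomotopic i X Y g h) :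
    DigHomotopic i X Y f h := by
  obtain ⟨m, H₁, hH₁, hH₁f, hH₁g⟩ := h₁
  obtain ⟨n, H₂, hH₂, hH₂g, hH₂h⟩ := h₂
  -- run `H₁` on `[0, m]` and `H₂` on `[m, m + n]`, each held constant outside its interval
  let φ₁ (t : Fin (m + n + 1)) : Fin (m + 1) := ⟨min t m, Nat.lt_succ_of_le (min_le_right _ _)⟩
  let φ₂ (t : Fin (m + n + 1)) : Fin (n + 1) := ⟨t - m, by have := t.isLt; omega⟩
  have hφ₁ : DigContinuous (digInterval (m + n)) (digInterval m) φ₁ := fun s t hst =>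
    have := (digInterval_adj_iff s t).1 hst
    (digInterval_adj_iff _ _).2 (by dsimp only [φ₁]; omega)
  have hφ₂ : DigContinuous (digInterval (m + n)) (digInterval n) φ₂ := fun s t hst =>
    have := (digInterval_adj_iff s t).1 hst
    (digInterval_adj_iff _ _).2 (by dsimp only [φ₂]; omega)
  let K₁ := H₁ ∘ Prod.map id φ₁
  let K₂ := H₂ ∘ Prod.map id φ₂
  have hK₁ : DigContinuous (prod i X (digInterval (m + n))) Y K₁ :=
    hH₁.comp ((DigContinuous.id X).prodMap hφ₁)
  have hK₂ : DigContinuous (prod i X (digInterval (m + n))) Y K₂ :=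
    hH₂.comp ((DigContinuous.id X).prodMap hφ₂)
  let H (p : X.carrier × Fin (m + n + 1)) : Y.carrier := if (p.2 : ℕ) ≤ m then K₁ p else K₂ p
  have hHK₁ : ∀ x (t : Fin (m + n + 1)), (t : ℕ) ≤ m → H (x, t) = K₁ (x, t) :=
    fun _ _ ht => if_pos ht
  have hHK₂ : ∀ x (t : Fin (m + n + 1)), m ≤ (t : ℕ) → H (x, t) = K₂ (x, t) := by
    intro x t ht
    by_cases htm : (t : ℕ) ≤ m
    · have hφ₁t : φ₁ t = Fin.last m := Fin.ext (by simp only [φ₁, Fin.val_last]; omega)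
      have hφ₂t : φ₂ t = 0 := Fin.ext (by simp only [φ₂, Fin.val_zero]; omega)
      simp only [hHK₁ x t htm, K₁, K₂, comp_apply, Prod.map_apply, id, hφ₁t, hφ₂t, hH₁g, hH₂g]
    · exact if_neg htm
  refine ⟨m + n, H, ?_, fun x => ?_, fun x => ?_⟩
  · rintro ⟨x, (s : Fin (m + n + 1))⟩ ⟨x', (t : Fin (m + n + 1))⟩ hst
    show Y.adj (H (x, s)) (H (x', t))
    have hst' := (digInterval_adj_iff s t).1 (prod_adj_dest hst).2.1
    rcases (by omega : (s ≤ m ∧ t ≤ m) ∨ (m ≤ s ∧ m ≤ t)) with ⟨hs, ht⟩ | ⟨hs, ht⟩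
    · rw [hHK₁ x s hs, hHK₁ x' t ht]; exact hK₁ hst
    · rw [hHK₂ x s hs, hHK₂ x' t ht]; exact hK₂ hst
  · rw [hHK₁ x 0 (Nat.zero_le m), ← hH₁f]
    rfl
  · rw [hHK₂ x (Fin.last _) (by simp), ← hH₂h]
    exact congrArg (fun t => H₂ (x, t)) (Fin.ext (by simp [φ₂]))

theorem comp_right {k : W.carrier → X.carrier} (hk : DigContinuous W X k)
    (hfg : DigHomotopic i X Y f g) : DigHomotopic i W Y (f ∘ k) (g ∘ k) :=
  have ⟨m, H, hH, hHf, hHg⟩ := hfg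
  ⟨m, H ∘ Prod.map k id, hH.comp (hk.prodMap (DigContinuous.id _)),
    fun w => hHf (k w), fun w => hHg (k w)⟩

theorem iterate {f : X.carrier → X.carrier} (hf : DigContinuous X X f)
    (hfid : DigHomotopic i X X f id) (n : ℕ) : DigHomotopic i X X f^[n] id := by
  induction n with
  | zero => exact .refl (DigContinuous.id X)
  | succ n ih => exact (ih.comp_right hf).trans hfid

end DigHomotopic

section Irreducible

variable {i : ℕ} {X : DigImage} {r f : X.carrier → X.carrier}

theorem digHtpyEquiv_range_of_idempotent (hr : DigContinuous X X r) (hidem : r ∘ r = r)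
    (hrid : DigHomotopic i X X r id) : DigHtpyEquiv i X (subImage X (· ∈ Set.range r)) := by
  refine ⟨fun x => ⟨r x, x, rfl⟩, Subtype.val, fun _ _ h => hr h, fun _ _ h => h, hrid, ?_⟩
  convert DigHomotopic.refl (DigContinuous.id _) using 1
  funext ⟨_, y, rfl⟩
  exact Subtype.ext (congrFun hidem y)

theorem DigIrreducible.surjective_of_idempotent (hirr : DigIrreducible i X)
    (hr : DigContinuous X X r) (hidem : r ∘ r = r) (hrid : DigHomotopic i X X r id) :
    Surjective r := by
  by_contra hns
  refine hirr ⟨_, ?_, digHtpyEquiv_range_of_idempotent hr hidem hrid⟩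
  classical
  obtain ⟨x, hx⟩ := not_forall.1 hns
  rw [← Nat.card_eq_fintype_card, ← Nat.card_eq_fintype_card]
  exact Finite.card_subtype_lt (p := (· ∈ Set.range r)) hx

theorem DigIrreducible.isDigIso_of_homotopic_id (hirr : DigIrreducible i X)
    (hf : DigContinuous X X f) (hfid : DigHomotopic i X X f id) : IsDigIso X X f := by
  obtain ⟨n, hn, hidem⟩ := exists_iterate_idempotent f
  have hsurj := hirr.surjective_of_idempotent (hf.iterate n) hidem (hfid.iterate hf n)
  have hid : f^[n] = id := funext <| hsurj.forall.2 fun x => congrFun hidem x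
  obtain ⟨k, rfl⟩ : ∃ k, n = k + 1 := ⟨n - 1, by omega⟩
  refine ⟨hf, f^[k], hf.iterate k, fun x => ?_, fun x => ?_⟩
  · exact (iterate_succ_apply f k x).symm.trans (congrFun hid x)
  · exact (iterate_succ_apply' f k x).symm.trans (congrFun hid x)

end Irreducible

section Translation

variable {i : ℕ} {X : DigImage} {μ : X.carrier × X.carrier → X.carrier}

theorem digContinuous_mul_const (hμ : DigContinuous (prod i X X) X μ) (a : X.carrier) :
    DigContinuous X X fun y => μ (y, a) :=
  hμ.comp (DigContinuous.prodMk_right a)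

theorem digContinuous_const_mul (hμ : DigContinuous (prod i X X) X μ) (a : X.carrier) :
    DigContinuous X X fun y => μ (a, y) :=
  hμ.comp (DigContinuous.prodMk_left a)

theorem digHomotopic_mul_const_of_adj (hμ : DigContinuous (prod i X X) X μ) {a b : X.carrier}
    (hab : X.adj a b) : DigHomotopic i X X (fun y => μ (y, a)) (fun y => μ (y, b)) :=
  ⟨1, μ ∘ Prod.map id ![a, b], hμ.comp ((DigContinuous.id X).prodMap (.segment hab)),
    fun _ => rfl, fun _ => rfl⟩

theorem digHomotopic_mul_const_of_reflTransGen (hμ : DigContinuous (prod i X X) X μ)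
    {a b : X.carrier} (hab : Relation.ReflTransGen X.adj a b) :
    DigHomotopic i X X (fun y => μ (y, a)) (fun y => μ (y, b)) := by
  induction hab with
  | refl => exact .refl (digContinuous_mul_const hμ a)
  | tail _ hbc ih => exact ih.trans (digHomotopic_mul_const_of_adj hμ hbc)

theorem exists_left_inverse_of_isDigIso (hμ : DigContinuous (prod i X X) X μ)
    (hiso : ∀ a, IsDigIso X X fun y => μ (y, a)) (e : X.carrier) :
    ∃ α : X.carrier → X.carrier, DigContinuous X X α ∧ ∀ x, μ (α x, x) = e := by
  choose _ g hg hgμ hμg using hiso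
  refine ⟨fun x => g x e, fun x x' hxx' => ?_, fun x => hμg x e⟩
  have hadj := digContinuous_const_mul hμ (g x' e) hxx'
  rw [hμg x' e] at hadj
  simpa only [hgμ x (g x' e)] using X.adj_symm (hg x hadj)

end Translation

namespace IsHSpace

variable {i : ℕ} {X : DigImage} {e : X.carrier} {μ : X.carrier × X.carrier → X.carrier}

theorem swap (h : IsHSpace i X e μ) : IsHSpace i X e fun p => μ p.swap where
  continuous _ _ hpq := h.continuous (prod_adj_swap hpq)
  right_unit := h.left_unit
  left_unit := h.right_unit

theorem homotopic_mul_const_id (h : IsHSpace i X e μ) (hconn : DigConnected X) (a : X.carrier) :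
    DigHomotopic i X X (fun y => μ (y, a)) id :=
  (digHomotopic_mul_const_of_reflTransGen h.continuous (hconn a e)).trans h.right_unit

theorem exists_left_inverse (h : IsHSpace i X e μ) (hconn : DigConnected X)
    (hirr : DigIrreducible i X) :
    ∃ α : X.carrier → X.carrier, DigContinuous X X α ∧ ∀ x, μ (α x, x) = e :=
  exists_left_inverse_of_isDigIso h.continuous (fun a => hirr.isDigIso_of_homotopic_id
    (digContinuous_mul_const h.continuous a) (h.homotopic_mul_const_id hconn a)) e

end IsHSpace

theorem irreducible_has_inverses_general (i : ℕ)
    (X : DigImage) (e : X.carrier) (μ : X.carrier × X.carrier → X.carrier)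
    (h : IsHSpace i X e μ) (hconn : DigConnected X) (hirr : DigIrreducible i X) :
    (∃ α : X.carrier → X.carrier, DigContinuous X X α ∧ ∀ x, μ (α x, x) = e) ∧
    (∃ β : X.carrier → X.carrier, DigContinuous X X β ∧ ∀ x, μ (x, β x) = e) :=
  ⟨h.exists_left_inverse hconn hirr, h.swap.exists_left_inverse hconn hirr⟩

/-- A connected `NP_i`-irreducible `NP_i`-digital H-space has
left and right inverse maps. -/
theorem irreducible_has_inverses (i : ℕ) (hi : i = 1 ∨ i = 2)
    (X : DigImage) (e : X.carrier) (μ : X.carrier × X.carrier → X.carrier)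
    (h : IsHSpace i X e μ) (hconn : DigConnected X) (hirr : DigIrreducible i X) :
    (∃ α : X.carrier → X.carrier, DigContinuous X X α ∧ ∀ x, μ (α x, x) = e) ∧
    (∃ β : X.carrier → X.carrier, DigContinuous X X β ∧ ∀ x, μ (x, β x) = e) :=
  irreducible_has_inverses_general i X e μ h hconn hirr
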